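/- Let G be a finite simple graph on a vertex set V without isolated vertices and let 𝓛 be its normalized Laplacian, a symmetric linear endomorphism of the space of functions V → ℂ. Suppose S ⊆ V is a Λ-set for some Λ > 0, i.e., ∑_{v∈V}|φ(v)|² ≤ Λ²·∑_{v∈V}|(𝓛φ)(v)|² for every φ : V → ℂ supported in S. If 0 ≤ ω < 1/Λ and f, g ∈ PW_ω(G) agree at every vertex of V \ S, then f = g; that is, V \ S is a uniqueness set for the Paley–Wiener space PW_ω(G). -/

import Mathlib

/-- The normalized Laplacian of a finite simple graph as a linear endomorphism of `V → ℂ`: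
`(𝓛 f) v = f v − ∑_{u ∼ v} f u / √(d u · d v)`. -/
noncomputable def nLapL {V : Type*} [Fintype V] (G : SimpleGraph V) [DecidableRel G.Adj] :
    (V → ℂ) →ₗ[ℂ] (V → ℂ) where
  toFun f := fun v =>
    f v - ∑ u ∈ G.neighborFinset v, f u / (Real.sqrt ((G.degree u : ℝ) * (G.degree v : ℝ)) : ℂ)
  map_add' f g := by
    funext v
    simp only [Pi.add_apply, add_div, Finset.sum_add_distrib]
    ring
  map_smul' a f := by
    funext v
    simp only [Pi.smul_apply, smul_eq_mul, RingHom.id_apply, mul_sub, Finset.mul_sum,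
      mul_div_assoc]

/-- The Paley–Wiener space `PW_ω(G)`: the span (supremum) of the eigenspaces of the normalized
Laplacian corresponding to (real) eigenvalues `μ ≤ ω`. -/
noncomputable def PW {V : Type*} [Fintype V] (G : SimpleGraph V) [DecidableRel G.Adj] (ω : ℝ) :
    Submodule ℂ (V → ℂ) :=
  ⨆ μ : ℝ, ⨆ _ : μ ≤ ω, Module.End.eigenspace (nLapL G) (μ : ℂ)

/-! The difference `φ = f - g` lies in `PW_ω(G)` and vanishes off `S`. The normalized Laplacian
is positive semidefinite (`⟪𝓛x, x⟫ = ‖x‖² - ∑_{u ∼ v} x̄_v x_u / √(d_u d_v)`, and AM–GM bounds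
the sum by `‖x‖²`), so the eigenvalues contributing to `PW_ω(G)` lie in `[0, ω]` and
`‖𝓛φ‖ ≤ ω ‖φ‖` (Bernstein). The `Λ`-set inequality then gives `‖φ‖ ≤ Λ ‖𝓛φ‖ ≤ Λω ‖φ‖` with
`Λω < 1`, hence `φ = 0`. -/

open Module.End

namespace LinearMap.IsSymmetric

variable {𝕜 E : Type*} [RCLike 𝕜] [NormedAddCommGroup E] [InnerProductSpace 𝕜 E]
  {T : E →ₗ[𝕜] E}

theorem inner_eq_zero_of_mem_iSup_eigenspace (hT : T.IsSymmetric) {p : ℝ → Prop} {μ : ℝ}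
    {v x : E} (hv : v ∈ eigenspace T μ) (hμ : ¬ p μ)
    (hx : x ∈ ⨆ ν : ℝ, ⨆ _ : p ν, eigenspace T ν) : inner 𝕜 v x = 0 := by
  suffices (⨆ ν : ℝ, ⨆ _ : p ν, eigenspace T (ν : 𝕜)) ≤ LinearMap.ker (innerₛₗ 𝕜 v) from this hx
  refine iSup₂_le fun ν hν y hy => ?_
  have hne : (μ : 𝕜) ≠ ν := fun h => hμ (by rwa [RCLike.ofReal_inj.mp h])
  exact hT.orthogonalFamily_eigenspaces hne ⟨v, hv⟩ ⟨y, hy⟩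

theorem norm_apply_le_of_mem_iSup_eigenspace [FiniteDimensional 𝕜 E] (hT : T.IsSymmetric)
    {p : ℝ → Prop} {c : ℝ} (hc : 0 ≤ c) (hpc : ∀ μ : ℝ, p μ → HasEigenvalue T μ → |μ| ≤ c)
    {x : E} (hx : x ∈ ⨆ μ : ℝ, ⨆ _ : p μ, eigenspace T μ) : ‖T x‖ ≤ c * ‖x‖ := by
  set b := hT.eigenvectorBasis rfl
  set μ := hT.eigenvalues rfl
  have hcoeff (i) : ‖inner 𝕜 (b i) (T x)‖ ^ 2 ≤ c ^ 2 * ‖inner 𝕜 (b i) x‖ ^ 2 := by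
    rw [← b.repr_apply_apply, hT.eigenvectorBasis_apply_self_apply, b.repr_apply_apply,
      norm_mul, mul_pow, RCLike.norm_ofReal]
    by_cases hi : p (μ i)
    · gcongr
      exact hpc _ hi (hT.hasEigenvalue_eigenvalues rfl i)
    · rw [hT.inner_eq_zero_of_mem_iSup_eigenspace (mem_eigenspace_iff.mpr
        (hT.apply_eigenvectorBasis rfl i)) hi hx]
      simp
  rw [← pow_le_pow_iff_left₀ (norm_nonneg _) (by positivity) two_ne_zero, mul_pow,
    ← b.sum_sq_norm_inner_right, ← b.sum_sq_norm_inner_right, Finset.mul_sum]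
  exact Finset.sum_le_sum fun i _ => hcoeff i

end LinearMap.IsSymmetric

theorem LinearMap.IsPositive.norm_apply_le_of_mem_iSup_eigenspace {𝕜 E : Type*} [RCLike 𝕜]
    [NormedAddCommGroup E] [InnerProductSpace 𝕜 E] [FiniteDimensional 𝕜 E] {T : E →ₗ[𝕜] E}
    (hT : T.IsPositive) {ω : ℝ} {x : E} (hx : x ∈ ⨆ μ : ℝ, ⨆ _ : μ ≤ ω, eigenspace T μ) :
    ‖T x‖ ≤ max ω 0 * ‖x‖ := by
  refine hT.isSymmetric.norm_apply_le_of_mem_iSup_eigenspace (le_max_right _ _)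
    (fun μ hμω hμ => ?_) hx
  rw [abs_of_nonneg (eigenvalue_nonneg_of_nonneg hμ hT.re_inner_nonneg_right)]
  exact le_max_of_le_left hμω

theorem LinearEquiv.map_eigenspace_le_eigenspace_conj {R M N : Type*} [CommRing R]
    [AddCommGroup M] [Module R M] [AddCommGroup N] [Module R N] (e : M ≃ₗ[R] N)
    (f : Module.End R M) (μ : R) :
    (eigenspace f μ).map e.toLinearMap ≤ eigenspace (e.conj f) μ := by
  rintro _ ⟨y, hy, rfl⟩
  rw [SetLike.mem_coe, mem_eigenspace_iff] at hy
  rw [mem_eigenspace_iff]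
  simp [LinearEquiv.conj_apply_apply, hy]

open ComplexConjugate

theorem Complex.re_conj_mul_div_sqrt_le {a b : ℝ} (ha : 0 < a) (hb : 0 < b) (z w : ℂ) :
    (conj z * w).re / Real.sqrt (a * b) ≤ (‖z‖ ^ 2 / a + ‖w‖ ^ 2 / b) / 2 := by
  have hz := Real.sqrt_pos.mpr ha
  have hw := Real.sqrt_pos.mpr hb
  calc (conj z * w).re / Real.sqrt (a * b)
      ≤ ‖z‖ * ‖w‖ / Real.sqrt (a * b) := by
        gcongr
        simpa only [norm_mul, Complex.norm_conj] using Complex.re_le_norm (conj z * w)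
    _ = (‖z‖ / Real.sqrt a) * (‖w‖ / Real.sqrt b) := by
        rw [Real.sqrt_mul ha.le, div_mul_div_comm]
    _ ≤ ((‖z‖ / Real.sqrt a) ^ 2 + (‖w‖ / Real.sqrt b) ^ 2) / 2 := by
        nlinarith [sq_nonneg (‖z‖ / Real.sqrt a - ‖w‖ / Real.sqrt b)]
    _ = (‖z‖ ^ 2 / a + ‖w‖ ^ 2 / b) / 2 := by
        rw [div_pow, div_pow, Real.sq_sqrt ha.le, Real.sq_sqrt hb.le]

namespace SimpleGraph

variable {V : Type*} [Fintype V] (G : SimpleGraph V) [DecidableRel G.Adj]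

theorem sum_sum_neighborFinset_comm {M : Type*} [AddCommMonoid M] (F : V → V → M) :
    ∑ v, ∑ u ∈ G.neighborFinset v, F u v = ∑ v, ∑ u ∈ G.neighborFinset v, F v u := by
  simp only [neighborFinset_eq_filter, Finset.sum_filter]
  rw [Finset.sum_comm]
  exact Finset.sum_congr rfl fun v _ =>
    Finset.sum_congr rfl fun u _ => if_congr (G.adj_comm u v) rfl rfl

/-- The sesquilinear form of the normalized adjacency operator `D^{-1/2} A D^{-1/2}`. -/
noncomputable def nAdjForm (x y : V → ℂ) : ℂ :=
  ∑ v, ∑ u ∈ G.neighborFinset v,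
    conj (x v) * y u / (Real.sqrt ((G.degree u : ℝ) * (G.degree v : ℝ)) : ℂ)

theorem conj_nAdjForm_self (x : V → ℂ) : conj (G.nAdjForm x x) = G.nAdjForm x x := by
  simp only [nAdjForm, map_sum, map_div₀, map_mul, Complex.conj_ofReal, Complex.conj_conj]
  rw [sum_sum_neighborFinset_comm]
  refine Finset.sum_congr rfl fun v _ => Finset.sum_congr rfl fun u _ => ?_
  rw [mul_comm (x u), mul_comm (G.degree v : ℝ)]

theorem re_nAdjForm_self_le (x : V → ℂ) : (G.nAdjForm x x).re ≤ ∑ v, ‖x v‖ ^ 2 := by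
  set B : V → ℝ := fun v => ‖x v‖ ^ 2 / G.degree v
  calc (G.nAdjForm x x).re
      = ∑ v, ∑ u ∈ G.neighborFinset v, (conj (x v) * x u).re
          / Real.sqrt ((G.degree u : ℝ) * (G.degree v : ℝ)) := by
        simp only [nAdjForm, Complex.re_sum, Complex.div_ofReal_re]
    _ ≤ ∑ v, ∑ u ∈ G.neighborFinset v, (B v + B u) / 2 := by
        refine Finset.sum_le_sum fun v _ => Finset.sum_le_sum fun u hu => ?_
        rw [mem_neighborFinset] at hu
        rw [mul_comm (G.degree u : ℝ)]
        exact Complex.re_conj_mul_div_sqrt_le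
          (Nat.cast_pos.mpr ((G.degree_pos_iff_exists_adj v).2 ⟨u, hu⟩))
          (Nat.cast_pos.mpr ((G.degree_pos_iff_exists_adj u).2 ⟨v, hu.symm⟩)) _ _
    _ = ∑ v, ∑ _u ∈ G.neighborFinset v, B v := by
        simp only [add_div, Finset.sum_add_distrib]
        rw [sum_sum_neighborFinset_comm G fun u _ => B u / 2]
        simp only [← Finset.sum_add_distrib, add_halves]
    _ ≤ ∑ v, ‖x v‖ ^ 2 := by
        refine Finset.sum_le_sum fun v _ => ?_
        rw [Finset.sum_const, card_neighborFinset_eq_degree, nsmul_eq_mul]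
        rcases (G.degree v).eq_zero_or_pos with h | h
        · simp [h]
        · rw [mul_div_cancel₀ _ (by positivity)]

end SimpleGraph

section nLapLEuclid

variable {V : Type*} [Fintype V] (G : SimpleGraph V) [DecidableRel G.Adj]

/-- `nLapL G` transported to `ℓ²(V)`: `V → ℂ` carries the sup norm, so the spectral theorem is
applied on `EuclideanSpace ℂ V`. -/
noncomputable def nLapLEuclid : Module.End ℂ (EuclideanSpace ℂ V) :=
  (WithLp.linearEquiv 2 ℂ (V → ℂ)).symm.conj (nLapL G)

theorem sum_conj_mul_nLapL (x y : V → ℂ) :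
    ∑ v, conj (x v) * nLapL G y v = ∑ v, conj (x v) * y v - G.nAdjForm x y := by
  simp only [SimpleGraph.nAdjForm, ← Finset.sum_sub_distrib, mul_div_assoc, ← Finset.mul_sum,
    ← mul_sub]
  rfl

theorem inner_nLapLEuclid_self (x : EuclideanSpace ℂ V) :
    inner ℂ (nLapLEuclid G x) x = ((∑ v, ‖x v‖ ^ 2 : ℝ) : ℂ) - G.nAdjForm x.ofLp x.ofLp := by
  have hsq : ∑ v, conj (x v) * x v = ((∑ v, ‖x v‖ ^ 2 : ℝ) : ℂ) := by
    push_cast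
    exact Finset.sum_congr rfl fun v _ => RCLike.conj_mul _
  rw [← inner_conj_symm, PiLp.inner_apply]
  simp only [RCLike.inner_apply']
  change conj (∑ v, conj (x v) * nLapL G x.ofLp v) = _
  rw [sum_conj_mul_nLapL, hsq, map_sub, Complex.conj_ofReal, G.conj_nAdjForm_self]

theorem isPositive_nLapLEuclid : (nLapLEuclid G).IsPositive := by
  refine (LinearMap.isPositive_iff_complex _).2 fun x => ?_
  have hreal : ((G.nAdjForm x.ofLp x.ofLp).re : ℂ) = G.nAdjForm x.ofLp x.ofLp :=
    Complex.conj_eq_iff_re.1 (G.conj_nAdjForm_self _)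
  rw [inner_nLapLEuclid_self, ← hreal, ← Complex.ofReal_sub, RCLike.re_to_complex,
    Complex.ofReal_re]
  exact ⟨rfl, sub_nonneg.2 (G.re_nAdjForm_self_le x.ofLp)⟩

theorem toLp_mem_iSup_eigenspace_nLapLEuclid {ω : ℝ} {f : V → ℂ} (hf : f ∈ PW G ω) :
    WithLp.toLp 2 f ∈ ⨆ μ : ℝ, ⨆ _ : μ ≤ ω, eigenspace (nLapLEuclid G) μ := by
  have hmap : (PW G ω).map (WithLp.linearEquiv 2 ℂ (V → ℂ)).symm.toLinearMap ≤
      ⨆ μ : ℝ, ⨆ _ : μ ≤ ω, eigenspace (nLapLEuclid G) μ := by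
    simp only [PW, Submodule.map_iSup]
    exact iSup₂_mono fun μ _ => LinearEquiv.map_eigenspace_le_eigenspace_conj _ _ _
  exact hmap (Submodule.mem_map_of_mem hf)

end nLapLEuclid

theorem sq_mul_max_lt_one {Λ ω : ℝ} (hω : ω < 1 / Λ) : (Λ * max ω 0) ^ 2 < 1 := by
  rcases le_or_gt Λ 0 with hΛ | hΛ
  · rw [max_eq_right (hω.le.trans (one_div_nonpos.2 hΛ))]
    norm_num
  · have hlt : Λ * max ω 0 < 1 := by
      rw [mul_max_of_nonneg _ _ hΛ.le, mul_zero]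
      exact max_lt ((lt_div_iff₀' hΛ).1 hω) one_pos
    nlinarith [mul_nonneg hΛ.le (le_max_right ω 0)]

theorem compl_lambda_set_uniqueness {V : Type*} [Fintype V] (G : SimpleGraph V)
    [DecidableRel G.Adj]
    (Λ : ℝ) (S : Set V)
    (hS : ∀ φ : V → ℂ, (∀ v, v ∉ S → φ v = 0) →
      ∑ v, ‖φ v‖ ^ 2 ≤ Λ ^ 2 * ∑ v, ‖nLapL G φ v‖ ^ 2)
    (ω : ℝ) (hω : ω < 1 / Λ)
    (f g : V → ℂ) (hf : f ∈ PW G ω) (hg : g ∈ PW G ω)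
    (hagree : ∀ v, v ∉ S → f v = g v) :
    f = g := by
  set x := WithLp.toLp 2 (f - g)
  have hbernstein : ‖nLapLEuclid G x‖ ≤ max ω 0 * ‖x‖ :=
    (isPositive_nLapLEuclid G).norm_apply_le_of_mem_iSup_eigenspace
      (toLp_mem_iSup_eigenspace_nLapLEuclid G (sub_mem hf hg))
  have hΛset : ‖x‖ ^ 2 ≤ Λ ^ 2 * ‖nLapLEuclid G x‖ ^ 2 := by
    rw [EuclideanSpace.norm_sq_eq, EuclideanSpace.norm_sq_eq]
    exact hS (f - g) fun v hv => sub_eq_zero.2 (hagree v hv)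
  have hcontract : ‖x‖ ^ 2 ≤ (Λ * max ω 0) ^ 2 * ‖x‖ ^ 2 := calc
    ‖x‖ ^ 2 ≤ Λ ^ 2 * ‖nLapLEuclid G x‖ ^ 2 := hΛset
    _ ≤ Λ ^ 2 * (max ω 0 * ‖x‖) ^ 2 := by gcongr
    _ = (Λ * max ω 0) ^ 2 * ‖x‖ ^ 2 := by ring
  have hx : ‖x‖ ^ 2 = 0 := by nlinarith [sq_mul_max_lt_one hω, sq_nonneg ‖x‖]
  exact sub_eq_zero.1 (congrArg WithLp.ofLp (norm_eq_zero.1 (pow_eq_zero_iff two_ne_zero |>.1 hx)))
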